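/- arXiv:2102.03579 — 3 statements merged into one kernel-verified Lean document; each statement's English description precedes it below -/
import Mathlib

section
/- For integers l ≥ 1 and 0 ≤ m ≤ l, let Q(t) = (1-t²)^{m/2} · d^{m+l}/dt^{m+l}[(1-t²)^l] on [-1,1]. Then the ratio (∫_{-1}^{1} t² Q(t)² dt) / (∫_{-1}^{1} Q(t)² dt) equals (2l² - 2m² + 2l - 1) / ((2l+3)(2l-1)). -/
/-!
On `[-1, 1]` we have `Q² = (1 - t²)^m P²` with `P = D^{m+l} (1 - t²)^l` a polynomial of degree
`l - m`. For a polynomial weight `s`, integrating `s Q² = P · (1 - t²)^m P s` by parts `m + l`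
times moves every derivative onto `(1 - t²)^l`; the boundary terms vanish because `(1 - t²)^l`
and `(1 - t²)^m` vanish to orders `l` and `m` at `±1`. What is left is
`± ∫ (1 - t²)^l g^{(m+l)}` with `g = (1 - t²)^m P s`; for `s ∈ {1, t²}` the derivative
`g^{(m+l)}` is a quadratic, so only the two top coefficients of `g` enter, together with the
moments `∫ t (1 - t²)^l = 0` and `(2l + 3) ∫ t² (1 - t²)^l = ∫ (1 - t²)^l`.
The top coefficients of `g` are the bottom coefficients of its reflection, which is
multiplicative, and `(1 - X²)^n` is its own reflection up to sign, so everything reduces to the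
coefficients of `1, X, X²` in `(1 - X²)^n`.
-/

open Polynomial intervalIntegral

/-- The unnormalized associated Legendre function
`Q_l^m(t) = (1-t²)^{m/2} (d/dt)^{m+l} (1-t²)^l`. -/
noncomputable def assocLegendreQ (l m : ℕ) (t : ℝ) : ℝ :=
  (Real.sqrt (1 - t ^ 2)) ^ m * iteratedDeriv (m + l) (fun s : ℝ => (1 - s ^ 2) ^ l) t

namespace Polynomial

section Semiring

variable {R : Type*} [Semiring R]

theorem coeff_reflect_zero (N : ℕ) (p : R[X]) : (reflect N p).coeff 0 = p.coeff N := by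
  rw [coeff_reflect, revAt_zero]

theorem coeff_mul_X_sq_eq_coeff_reflect {p : R[X]} {N : ℕ} (hp : p.natDegree ≤ N) :
    (p * X ^ 2).coeff N = (reflect N p).coeff 2 := by
  rw [coeff_mul_X_pow', coeff_reflect]
  split_ifs with h
  · rw [revAt_le h]
  · rw [revAt_eq_self_of_lt (by omega), coeff_eq_zero_of_natDegree_lt (by omega)]

theorem coeff_reflect_iterate_derivative {p : R[X]} {N k : ℕ} (hp : p.natDegree ≤ N + k)
    (i : ℕ) :
    (reflect N (derivative^[k] p)).coeff i
      = (N + k - i).descFactorial k • (reflect (N + k) p).coeff i := by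
  rw [coeff_reflect, coeff_reflect]
  by_cases hi : i ≤ N
  · rw [revAt_le hi, revAt_le (by omega), coeff_iterate_derivative]
    congr 2 <;> omega
  · rw [revAt_eq_self_of_lt (by omega),
      coeff_eq_zero_of_natDegree_lt ((natDegree_iterate_derivative p k).trans_lt (by omega))]
    by_cases hik : i ≤ N + k
    · rw [Nat.descFactorial_eq_zero_iff_lt.mpr (by omega), zero_smul]
    · rw [revAt_eq_self_of_lt (by omega), coeff_eq_zero_of_natDegree_lt (by omega), smul_zero]

theorem eq_quadratic_of_natDegree_le_two {p : R[X]} (hp : p.natDegree ≤ 2) :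
    p = C (p.coeff 0) + C (p.coeff 1) * X + C (p.coeff 2) * X ^ 2 := by
  ext n
  rcases n with _ | _ | _ | n
  · simp
  · simp
  · simp
  · simp [coeff_eq_zero_of_natDegree_lt (show p.natDegree < n + 3 by omega)]

end Semiring

section CommSemiring

variable {R : Type*} [CommSemiring R]

theorem coeff_mul_two (p q : R[X]) :
    (p * q).coeff 2 = p.coeff 0 * q.coeff 2 + p.coeff 1 * q.coeff 1 + p.coeff 2 * q.coeff 0 := by
  rw [coeff_mul, Finset.Nat.sum_antidiagonal_eq_sum_range_succ_mk]
  simp [Finset.sum_range_succ]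

theorem isRoot_iterate_derivative_of_pow_dvd {p q : R[X]} {r j : ℕ} {t : R} (hdvd : q ^ r ∣ p)
    (hq : q.IsRoot t) (hj : j < r) : (derivative^[j] p).IsRoot t := by
  obtain ⟨s, hs⟩ := pow_sub_dvd_iterate_derivative_of_pow_dvd j hdvd
  rw [hs, IsRoot, eval_mul, eval_pow, hq.eq_zero, zero_pow (by omega), zero_mul]

end CommSemiring

section CommRing

variable {R : Type*} [CommRing R]

theorem natDegree_one_sub_X_sq_le : (1 - X ^ 2 : R[X]).natDegree ≤ 2 :=
  (natDegree_sub_le _ _).trans (max_le (by simp) (natDegree_X_pow_le 2))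

theorem natDegree_one_sub_X_sq_pow_le (n : ℕ) : ((1 - X ^ 2 : R[X]) ^ n).natDegree ≤ 2 * n :=
  (natDegree_pow_le_of_le n natDegree_one_sub_X_sq_le).trans_eq (mul_comm _ _)

theorem coeff_one_sub_X_sq_pow_zero (n : ℕ) : ((1 - X ^ 2 : R[X]) ^ n).coeff 0 = 1 := by
  simp [coeff_zero_eq_eval_zero]

theorem coeff_one_sub_X_sq_pow_one_two (n : ℕ) :
    ((1 - X ^ 2 : R[X]) ^ n).coeff 1 = 0 ∧ ((1 - X ^ 2 : R[X]) ^ n).coeff 2 = -n := by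
  induction n with
  | zero => simp [coeff_one]
  | succ n ih =>
    rw [pow_succ, mul_sub, mul_one, coeff_sub, coeff_sub, coeff_mul_X_pow', coeff_mul_X_pow',
      ih.1, ih.2, if_neg (by norm_num), if_pos le_rfl, Nat.sub_self, coeff_one_sub_X_sq_pow_zero]
    push_cast
    exact ⟨by ring, by ring⟩

theorem reflect_one_sub_X_sq_pow (n : ℕ) :
    reflect (2 * n) ((1 - X ^ 2 : R[X]) ^ n) = C ((-1) ^ n) * (1 - X ^ 2) ^ n := by
  induction n with
  | zero => simp
  | succ n ih =>
    have h2 : reflect 2 (1 - X ^ 2 : R[X]) = C (-1) * (1 - X ^ 2) := by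
      rw [reflect_sub, reflect_one, ← one_mul (X ^ 2 : R[X]), ← C_1, reflect_C_mul_X_pow]
      simp
    rw [pow_succ (1 - X ^ 2 : R[X]), mul_add, mul_one, reflect_mul _ _
      (natDegree_one_sub_X_sq_pow_le n) natDegree_one_sub_X_sq_le, ih, h2, pow_succ (-1 : R),
      C_mul]
    ring

end CommRing

theorem iteratedDeriv_eval (p : ℝ[X]) (n : ℕ) :
    iteratedDeriv n (fun x => p.eval x) = fun x => (derivative^[n] p).eval x := by
  induction n with
  | zero => simp
  | succ n ih =>
    rw [iteratedDeriv_succ, ih, Function.iterate_succ_apply']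
    funext x
    exact Polynomial.deriv _

end Polynomial

noncomputable def polyIntegral (a b : ℝ) : ℝ[X] →ₗ[ℝ] ℝ where
  toFun p := ∫ t in a..b, p.eval t
  map_add' p q := by
    simp only [eval_add]
    exact integral_add (p.continuous.intervalIntegrable _ _) (q.continuous.intervalIntegrable _ _)
  map_smul' c p := by simp

theorem polyIntegral_apply (a b : ℝ) (p : ℝ[X]) :
    polyIntegral a b p = ∫ t in a..b, p.eval t := rfl

theorem polyIntegral_derivative (a b : ℝ) (p : ℝ[X]) :
    polyIntegral a b (derivative p) = p.eval b - p.eval a :=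
  integral_eq_sub_of_hasDerivAt (fun x _ => p.hasDerivAt x)
    ((derivative p).continuous.intervalIntegrable _ _)

theorem polyIntegral_derivative_mul (a b : ℝ) (f g : ℝ[X]) :
    polyIntegral a b (derivative f * g)
      = (f * g).eval b - (f * g).eval a - polyIntegral a b (f * derivative g) := by
  rw [← polyIntegral_derivative, derivative_mul, map_add]
  ring

theorem polyIntegral_iterate_derivative_mul (a b : ℝ) (k : ℕ) (f g : ℝ[X])
    (hbdry : ∀ i j, i + j < k → (derivative^[i] f * derivative^[j] g).IsRoot a ∧
      (derivative^[i] f * derivative^[j] g).IsRoot b) :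
    polyIntegral a b (derivative^[k] f * g)
      = (-1) ^ k * polyIntegral a b (f * derivative^[k] g) := by
  induction k generalizing f with
  | zero => simp
  | succ k ih =>
    obtain ⟨ha, hb⟩ := hbdry 0 k (by omega)
    rw [Function.iterate_zero_apply] at ha hb
    rw [Function.iterate_succ_apply, ih (derivative f) fun i j hij => hbdry (i + 1) j (by omega),
      polyIntegral_derivative_mul, ha.eq_zero, hb.eq_zero, Function.iterate_succ_apply']
    ring

theorem polyIntegral_one_sub_X_sq_pow_pos (l : ℕ) :
    0 < polyIntegral (-1) 1 ((1 - X ^ 2) ^ l) := by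
  rw [polyIntegral_apply]
  refine intervalIntegral_pos_of_pos_on ((Polynomial.continuous _).intervalIntegrable _ _)
    (fun t ht => ?_) (by norm_num)
  have : 0 < 1 - t ^ 2 := by nlinarith [ht.1, ht.2]
  simpa using pow_pos this l

theorem polyIntegral_X_mul_one_sub_X_sq_pow (l : ℕ) :
    polyIntegral (-1) 1 (X * (1 - X ^ 2) ^ l) = 0 := by
  have hderiv : derivative ((1 - X ^ 2 : ℝ[X]) ^ (l + 1))
      = C (-(2 * (l + 1) : ℝ)) * (X * (1 - X ^ 2) ^ l) := by
    rw [derivative_pow, derivative_sub, derivative_one, derivative_X_sq, Nat.add_sub_cancel]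
    simp only [map_neg, map_mul, map_add, map_one, map_natCast, C_ofNat, Nat.cast_add, Nat.cast_one]
    ring
  have h := polyIntegral_derivative (-1) 1 ((1 - X ^ 2 : ℝ[X]) ^ (l + 1))
  rw [hderiv, C_mul', map_smul, smul_eq_mul] at h
  have hc : -(2 * (l + 1) : ℝ) ≠ 0 := by
    have : (0 : ℝ) < 2 * (l + 1) := by positivity
    linarith
  exact (mul_eq_zero.mp (h.trans (by simp))).resolve_left hc

theorem polyIntegral_X_sq_mul_one_sub_X_sq_pow (l : ℕ) :
    (2 * l + 3) * polyIntegral (-1) 1 (X ^ 2 * (1 - X ^ 2) ^ l)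
      = polyIntegral (-1) 1 ((1 - X ^ 2) ^ l) := by
  have hderiv : derivative (X * (1 - X ^ 2 : ℝ[X]) ^ (l + 1))
      = (1 - X ^ 2) ^ l - C (2 * l + 3 : ℝ) * (X ^ 2 * (1 - X ^ 2) ^ l) := by
    rw [derivative_mul, derivative_X, derivative_pow, derivative_sub, derivative_one,
      derivative_X_sq, Nat.add_sub_cancel]
    simp only [map_add, map_mul, map_one, map_natCast, C_ofNat, Nat.cast_add, Nat.cast_one]
    ring
  have h := polyIntegral_derivative (-1) 1 (X * (1 - X ^ 2 : ℝ[X]) ^ (l + 1))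
  rw [hderiv, C_mul', map_sub, map_smul, smul_eq_mul] at h
  have hbdry : eval 1 (X * (1 - X ^ 2 : ℝ[X]) ^ (l + 1))
      - eval (-1) (X * (1 - X ^ 2 : ℝ[X]) ^ (l + 1)) = 0 := by
    simp
  linarith

open Nat in
theorem polyIntegral_one_sub_X_sq_pow_mul_iterate_derivative (l k : ℕ) {q : ℝ[X]}
    (hq : q.natDegree ≤ k + 2) :
    polyIntegral (-1) 1 ((1 - X ^ 2) ^ l * derivative^[k] q)
      = k ! * (q.coeff k + (k + 1) * (k + 2) / (2 * (2 * l + 3)) * q.coeff (k + 2))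
        * polyIntegral (-1) 1 ((1 - X ^ 2) ^ l) := by
  have hdesc : ((k + 2).descFactorial k : ℝ) = (k + 1) * (k + 2) * k ! / 2 := by
    have h := factorial_mul_descFactorial (show k ≤ k + 2 by omega)
    rw [show k + 2 - k = 2 by omega, factorial_two, factorial_succ (k + 1), factorial_succ k] at h
    rw [eq_div_iff two_ne_zero]
    exact_mod_cast (by linarith : (k + 2).descFactorial k * 2 = (k + 1) * (k + 2) * k !)
  have hsplit : ∀ a b c : ℝ, (1 - X ^ 2) ^ l * (C a + C b * X + C c * X ^ 2)
      = a • (1 - X ^ 2) ^ l + b • (X * (1 - X ^ 2) ^ l) + c • (X ^ 2 * (1 - X ^ 2) ^ l) := by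
    intro a b c
    simp only [smul_eq_C_mul]
    ring
  have hdeg : (derivative^[k] q).natDegree ≤ 2 :=
    (natDegree_iterate_derivative q k).trans (by omega)
  rw [eq_quadratic_of_natDegree_le_two hdeg]
  simp only [coeff_iterate_derivative, zero_add, descFactorial_self]
  rw [hsplit, map_add, map_add, map_smul, map_smul, map_smul, polyIntegral_X_mul_one_sub_X_sq_pow,
    ← polyIntegral_X_sq_mul_one_sub_X_sq_pow l, add_comm 2 k]
  simp only [smul_eq_mul, nsmul_eq_mul, hdesc]
  field_simp
  ring

noncomputable def assocLegendrePoly (l m : ℕ) : ℝ[X] := derivative^[m + l] ((1 - X ^ 2) ^ l)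

theorem natDegree_assocLegendrePoly_le (l m : ℕ) : (assocLegendrePoly l m).natDegree ≤ l - m :=
  (natDegree_iterate_derivative _ _).trans
    (by have := natDegree_one_sub_X_sq_pow_le (R := ℝ) l; omega)

theorem natDegree_one_sub_X_sq_pow_mul_assocLegendrePoly_le {l m : ℕ} (hm : m ≤ l) :
    ((1 - X ^ 2) ^ m * assocLegendrePoly l m).natDegree ≤ m + l :=
  natDegree_mul_le.trans (by
    have := natDegree_one_sub_X_sq_pow_le (R := ℝ) m
    have := natDegree_assocLegendrePoly_le l m
    omega)

theorem coeff_reflect_assocLegendrePoly {l m : ℕ} (hm : m ≤ l) (i : ℕ) :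
    (reflect (l - m) (assocLegendrePoly l m)).coeff i
      = (2 * l - i).descFactorial (m + l) * ((-1) ^ l * ((1 - X ^ 2 : ℝ[X]) ^ l).coeff i) := by
  have hN : l - m + (m + l) = 2 * l := by omega
  rw [assocLegendrePoly, coeff_reflect_iterate_derivative (hN ▸ natDegree_one_sub_X_sq_pow_le l),
    hN, reflect_one_sub_X_sq_pow, coeff_C_mul, nsmul_eq_mul]

theorem reflect_one_sub_X_sq_pow_mul_assocLegendrePoly {l m : ℕ} (hm : m ≤ l) :
    reflect (m + l) ((1 - X ^ 2) ^ m * assocLegendrePoly l m)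
      = C ((-1) ^ m) * (1 - X ^ 2) ^ m * reflect (l - m) (assocLegendrePoly l m) := by
  rw [show m + l = 2 * m + (l - m) by omega, reflect_mul _ _ (natDegree_one_sub_X_sq_pow_le m)
    (natDegree_assocLegendrePoly_le l m), reflect_one_sub_X_sq_pow]

theorem coeff_one_sub_X_sq_pow_mul_assocLegendrePoly {l m : ℕ} (hm : m ≤ l) :
    ((1 - X ^ 2) ^ m * assocLegendrePoly l m).coeff (m + l)
      = (-1 : ℝ) ^ (m + l) * (2 * l).descFactorial (m + l) := by
  rw [← coeff_reflect_zero, reflect_one_sub_X_sq_pow_mul_assocLegendrePoly hm, mul_assoc,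
    coeff_C_mul, mul_coeff_zero, coeff_reflect_assocLegendrePoly hm, coeff_one_sub_X_sq_pow_zero,
    coeff_one_sub_X_sq_pow_zero, Nat.sub_zero]
  ring

theorem coeff_one_sub_X_sq_pow_mul_assocLegendrePoly_mul_X_sq {l m : ℕ} (hm : m ≤ l) :
    ((1 - X ^ 2) ^ m * assocLegendrePoly l m * X ^ 2).coeff (m + l)
      = -(-1 : ℝ) ^ (m + l)
        * (l * (2 * l - 2).descFactorial (m + l) + m * (2 * l).descFactorial (m + l)) := by
  obtain ⟨hv1, hv2⟩ := coeff_one_sub_X_sq_pow_one_two (R := ℝ) m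
  obtain ⟨-, hu2⟩ := coeff_one_sub_X_sq_pow_one_two (R := ℝ) l
  rw [coeff_mul_X_sq_eq_coeff_reflect (natDegree_one_sub_X_sq_pow_mul_assocLegendrePoly_le hm),
    reflect_one_sub_X_sq_pow_mul_assocLegendrePoly hm, mul_assoc, coeff_C_mul, coeff_mul_two,
    hv1, hv2]
  simp only [coeff_reflect_assocLegendrePoly hm, coeff_one_sub_X_sq_pow_zero, hu2, Nat.sub_zero]
  ring

theorem cast_descFactorial_two_mul_sub_two {l m : ℕ} (hm : m ≤ l) :
    (2 * l : ℝ) * (2 * l - 1) * (2 * l - 2).descFactorial (m + l)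
      = (l - m) * (l - m - 1) * (2 * l).descFactorial (m + l) := by
  have h1 := Nat.descFactorial_mul_descFactorial (n := 2 * l) (show 2 ≤ m + l + 2 by omega)
  have h2 := Nat.descFactorial_mul_descFactorial (n := 2 * l) (show m + l ≤ m + l + 2 by omega)
  rw [show m + l + 2 - 2 = m + l by omega] at h1
  rw [show m + l + 2 - (m + l) = 2 by omega, show 2 * l - (m + l) = l - m by omega] at h2
  have h := congrArg (Nat.cast (R := ℝ)) (h1.trans h2.symm)
  push_cast [Nat.cast_descFactorial_two, Nat.cast_sub hm] at h
  linarith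

theorem polyIntegral_assocLegendrePoly_mul (l m : ℕ) (s : ℝ[X]) :
    polyIntegral (-1) 1 (assocLegendrePoly l m * ((1 - X ^ 2) ^ m * s))
      = (-1) ^ (m + l)
        * polyIntegral (-1) 1 ((1 - X ^ 2) ^ l * derivative^[m + l] ((1 - X ^ 2) ^ m * s)) := by
  refine polyIntegral_iterate_derivative_mul _ _ _ _ _ fun i j hij => ?_
  have hroot : ∀ t : ℝ, t ^ 2 = 1 →
      (derivative^[i] ((1 - X ^ 2) ^ l) * derivative^[j] ((1 - X ^ 2) ^ m * s)).IsRoot t := by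
    intro t ht
    have h1 : (1 - X ^ 2 : ℝ[X]).IsRoot t := by simp [ht]
    rw [IsRoot, eval_mul]
    rcases lt_or_ge i l with hi | hi
    · rw [(isRoot_iterate_derivative_of_pow_dvd dvd_rfl h1 hi).eq_zero, zero_mul]
    · rw [(isRoot_iterate_derivative_of_pow_dvd (dvd_mul_right _ _) h1 (by omega)).eq_zero,
        mul_zero]
  exact ⟨hroot _ (by norm_num), hroot _ (by norm_num)⟩

theorem integral_mul_sq_assocLegendreQ (l m : ℕ) (s : ℝ[X]) :
    ∫ t in (-1:ℝ)..1, s.eval t * assocLegendreQ l m t ^ 2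
      = polyIntegral (-1) 1
          (assocLegendrePoly l m * ((1 - X ^ 2) ^ m * (assocLegendrePoly l m * s))) := by
  have hQ : (fun s : ℝ => (1 - s ^ 2) ^ l) = fun s => ((1 - X ^ 2 : ℝ[X]) ^ l).eval s := by
    simp
  rw [polyIntegral_apply]
  refine integral_congr fun t ht => ?_
  rw [Set.uIcc_of_le (by norm_num), Set.mem_Icc] at ht
  have h : (0:ℝ) ≤ 1 - t ^ 2 := by nlinarith
  rw [assocLegendreQ, hQ, iteratedDeriv_eval, mul_pow, ← pow_mul, mul_comm m, pow_mul,
    Real.sq_sqrt h]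
  simp only [eval_mul, eval_pow, eval_sub, eval_one, eval_X, assocLegendrePoly]
  ring

open Nat in
theorem integral_mul_sq_assocLegendreQ_eq {l m : ℕ} (hm : m ≤ l) {s : ℝ[X]}
    (hs : s.natDegree ≤ 2) :
    ∫ t in (-1:ℝ)..1, s.eval t * assocLegendreQ l m t ^ 2
      = (-1) ^ (m + l) * (m + l) !
        * (((1 - X ^ 2) ^ m * (assocLegendrePoly l m * s)).coeff (m + l)
          + (m + l + 1) * (m + l + 2) / (2 * (2 * l + 3))
            * ((1 - X ^ 2) ^ m * (assocLegendrePoly l m * s)).coeff (m + l + 2))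
        * polyIntegral (-1) 1 ((1 - X ^ 2) ^ l) := by
  have hdeg : ((1 - X ^ 2 : ℝ[X]) ^ m * (assocLegendrePoly l m * s)).natDegree ≤ m + l + 2 := by
    have := natDegree_one_sub_X_sq_pow_mul_assocLegendrePoly_le hm
    rw [← mul_assoc]
    exact natDegree_mul_le.trans (by omega)
  rw [integral_mul_sq_assocLegendreQ, polyIntegral_assocLegendrePoly_mul,
    polyIntegral_one_sub_X_sq_pow_mul_iterate_derivative l (m + l) hdeg]
  push_cast
  ring

theorem stmt0_general (l m : ℕ) (hm : m ≤ l) :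
    (∫ t in (-1:ℝ)..1, t ^ 2 * (assocLegendreQ l m t) ^ 2)
      / (∫ t in (-1:ℝ)..1, (assocLegendreQ l m t) ^ 2)
    = (2 * (l:ℝ) ^ 2 - 2 * (m:ℝ) ^ 2 + 2 * l - 1)
      / ((2 * (l:ℝ) + 3) * (2 * (l:ℝ) - 1)) := by
  have hden := integral_mul_sq_assocLegendreQ_eq hm (s := 1) (by simp)
  have hnum := integral_mul_sq_assocLegendreQ_eq hm (natDegree_X_pow_le (R := ℝ) 2)
  simp only [eval_one, one_mul, eval_X_pow, mul_one] at hden hnum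
  rw [hnum, hden, ← mul_assoc, coeff_mul_X_pow,
    coeff_one_sub_X_sq_pow_mul_assocLegendrePoly_mul_X_sq hm,
    coeff_one_sub_X_sq_pow_mul_assocLegendrePoly hm, coeff_eq_zero_of_natDegree_lt
      ((natDegree_one_sub_X_sq_pow_mul_assocLegendrePoly_le hm).trans_lt (by omega))]
  have hJ := polyIntegral_one_sub_X_sq_pow_pos l
  have hD := cast_descFactorial_two_mul_sub_two hm
  have hDpos : (0 : ℝ) < (2 * l).descFactorial (m + l) := by
    exact_mod_cast Nat.descFactorial_pos.mpr (by omega)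
  -- stated in the normal form `field_simp` produces, so that it can cancel this factor
  have h2l : (l * 2 - 1 : ℝ) ≠ 0 := by
    rw [sub_ne_zero]
    exact_mod_cast (by omega : l * 2 ≠ 1)
  field_simp
  linear_combination (-(2 * l + 3) ^ 2 * (-1 : ℝ) ^ (m + l)) * hD

theorem stmt0 (l m : ℕ) (hl : 1 ≤ l) (hm : m ≤ l) :
    (∫ t in (-1:ℝ)..1, t ^ 2 * (assocLegendreQ l m t) ^ 2)
      / (∫ t in (-1:ℝ)..1, (assocLegendreQ l m t) ^ 2)
    = (2 * (l:ℝ) ^ 2 - 2 * (m:ℝ) ^ 2 + 2 * l - 1)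
      / ((2 * (l:ℝ) + 3) * (2 * (l:ℝ) - 1)) :=
  stmt0_general l m hm
end

section
/- For integers l ≥ 1 and 0 ≤ m ≤ l, with Q(t) = (1-t²)^{m/2} · d^{m+l}/dt^{m+l}[(1-t²)^l], one has ∫_{-1}^{1} Q(t)² dt = ((2l)! (l+m)! / (l-m)!) · ∫_{-1}^{1} (1-t²)^l dt. -/
open Polynomial MeasureTheory

/-- iterated derivative of a polynomial function. -/
lemma iteratedDeriv_polyEval (p : Polynomial ℝ) (n : ℕ) :
    iteratedDeriv n (fun s : ℝ => p.eval s) = fun t => (derivative^[n] p).eval t := by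
  induction n with
  | zero => simp
  | succ n ih =>
    rw [iteratedDeriv_succ, ih]
    funext t
    rw [Function.iterate_succ_apply']
    exact Polynomial.deriv (p := derivative^[n] p)

/-- vanishing of derivatives from root multiplicity -/
lemma eval_iterate_derivative_eq_zero {A : Polynomial ℝ} {c : ℝ} {n j : ℕ}
    (h : (X - C c) ^ n ∣ A) (hj : j < n) :
    (derivative^[j] A).eval c = 0 := by
  have h2 : (X - C c) ^ (n - j) ∣ derivative^[j] A :=
    Polynomial.pow_sub_dvd_iterate_derivative_of_pow_dvd j h
  have h3 : (X - C c) ∣ derivative^[j] A :=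
    dvd_trans (dvd_pow_self _ (by omega)) h2
  refine eval_eq_zero_of_dvd_of_eval_eq_zero h3 ?_
  simp

/-- iterated integration by parts -/
lemma parts (k : ℕ) (B : Polynomial ℝ) : ∀ A : Polynomial ℝ,
    (∀ j < k, (derivative^[j] A).eval 1 * (derivative^[k-1-j] B).eval 1 = 0) →
    (∀ j < k, (derivative^[j] A).eval (-1) * (derivative^[k-1-j] B).eval (-1) = 0) →
    ∫ t in (-1:ℝ)..1, A.eval t * (derivative^[k] B).eval t
      = (-1:ℝ)^k * ∫ t in (-1:ℝ)..1, (derivative^[k] A).eval t * B.eval t := by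
  induction k with
  | zero => intro A _ _; simp
  | succ k ih =>
    intro A h1 h2
    have step : ∫ t in (-1:ℝ)..1, A.eval t * (derivative^[k+1] B).eval t
        = A.eval 1 * (derivative^[k] B).eval 1 - A.eval (-1) * (derivative^[k] B).eval (-1)
          - ∫ t in (-1:ℝ)..1, (derivative A).eval t * (derivative^[k] B).eval t := by
      refine intervalIntegral.integral_mul_deriv_eq_deriv_mul
        (u := fun x => A.eval x) (v := fun x => (derivative^[k] B).eval x)
        (u' := fun x => (derivative A).eval x) (v' := fun x => (derivative^[k+1] B).eval x)
        ?_ ?_ ?_ ?_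
      · intro x _; exact Polynomial.hasDerivAt A x
      · intro x _
        have := Polynomial.hasDerivAt (derivative^[k] B) x
        simp only [Function.iterate_succ_apply']
        exact this
      · exact ((derivative A).continuous_aeval).intervalIntegrable _ _
      · exact ((derivative^[k+1] B).continuous_aeval).intervalIntegrable _ _
    have hb1 : A.eval 1 * (derivative^[k] B).eval 1 = 0 := by
      have := h1 0 (Nat.succ_pos k); simpa using this
    have hb2 : A.eval (-1) * (derivative^[k] B).eval (-1) = 0 := by
      have := h2 0 (Nat.succ_pos k); simpa using this
    have ihA : ∫ t in (-1:ℝ)..1, (derivative A).eval t * (derivative^[k] B).eval t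
        = (-1:ℝ)^k * ∫ t in (-1:ℝ)..1, (derivative^[k] (derivative A)).eval t * B.eval t := by
      apply ih
      · intro j hj
        have := h1 (j+1) (by omega)
        rw [← Function.iterate_succ_apply]
        convert this using 4
        omega
      · intro j hj
        have := h2 (j+1) (by omega)
        rw [← Function.iterate_succ_apply]
        convert this using 4
        omega
    rw [step, hb1, hb2, ihA, ← Function.iterate_succ_apply]
    ring

theorem stmt2 (l m : ℕ) (hl : 1 ≤ l) (hm : m ≤ l) :
    (∫ t in (-1:ℝ)..1, (assocLegendreQ l m t) ^ 2)
    = (((2 * l).factorial : ℝ) * ((l + m).factorial : ℝ) / ((l - m).factorial : ℝ))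
      * ∫ t in (-1:ℝ)..1, (1 - t ^ 2) ^ l := by
  classical
  set p : Polynomial ℝ := (1 - X ^ 2) ^ l with hp
  set q : Polynomial ℝ := derivative^[l + m] p with hq
  set A : Polynomial ℝ := (1 - X ^ 2) ^ m * q with hA
  -- divisibility facts
  have hdvd1 : (X - C (1:ℝ)) ∣ (1 - X ^ 2) := ⟨-(X + C 1), by push_cast [map_one]; ring⟩
  have hdvd2 : (X - C (-1:ℝ)) ∣ (1 - X ^ 2) := ⟨C 1 - X, by push_cast [map_one, map_neg]; ring⟩
  have hp1 : (X - C (1:ℝ)) ^ l ∣ p := pow_dvd_pow_of_dvd hdvd1 l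
  have hp2 : (X - C (-1:ℝ)) ^ l ∣ p := pow_dvd_pow_of_dvd hdvd2 l
  have hA1 : (X - C (1:ℝ)) ^ m ∣ A := dvd_mul_of_dvd_left (pow_dvd_pow_of_dvd hdvd1 m) q
  have hA2 : (X - C (-1:ℝ)) ^ m ∣ A := dvd_mul_of_dvd_left (pow_dvd_pow_of_dvd hdvd2 m) q
  -- integration by parts
  have hparts := parts (l + m) p A
    (fun j hj => by
      rcases lt_or_ge j m with hjm | hjm
      · rw [eval_iterate_derivative_eq_zero hA1 hjm, zero_mul]
      · rw [eval_iterate_derivative_eq_zero hp1 (show l + m - 1 - j < l by omega), mul_zero])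
    (fun j hj => by
      rcases lt_or_ge j m with hjm | hjm
      · rw [eval_iterate_derivative_eq_zero hA2 hjm, zero_mul]
      · rw [eval_iterate_derivative_eq_zero hp2 (show l + m - 1 - j < l by omega), mul_zero])
  -- degree computations
  have hdeg2 : (1 - X ^ 2 : Polynomial ℝ).natDegree = 2 := by compute_degree!
  have hlc2 : (1 - X ^ 2 : Polynomial ℝ).leadingCoeff = -1 := by
    rw [Polynomial.leadingCoeff, hdeg2]
    simp [Polynomial.coeff_one]
  have hdegp : p.natDegree = 2 * l := by
    rw [hp, Polynomial.natDegree_pow, hdeg2, mul_comm]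
  have hpc : p.coeff (2 * l) = (-1 : ℝ) ^ l := by
    rw [← hdegp, Polynomial.coeff_natDegree, hp, Polynomial.leadingCoeff_pow, hlc2]
  have hqc : q.coeff (l - m) = ((2 * l).descFactorial (l + m) : ℝ) * (-1 : ℝ) ^ l := by
    rw [hq, Polynomial.coeff_iterate_derivative, show l - m + (l + m) = 2 * l by omega, hpc]
    simp [nsmul_eq_mul]
  have hfdNat : (l - m).factorial * (2 * l).descFactorial (l + m) = (2 * l).factorial := by
    have h := Nat.factorial_mul_descFactorial (show l + m ≤ 2 * l by omega)
    rwa [show 2 * l - (l + m) = l - m by omega] at h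
  have hdn : (2 * l).descFactorial (l + m) ≠ 0 := by
    intro h
    rw [h, mul_zero] at hfdNat
    exact (Nat.factorial_pos (2 * l)).ne' hfdNat.symm
  have hqc0 : q.coeff (l - m) ≠ 0 := by
    rw [hqc]
    exact mul_ne_zero (Nat.cast_ne_zero.mpr hdn) (pow_ne_zero _ (by norm_num))
  have hdegq_le : q.natDegree ≤ l - m := by
    have h := Polynomial.natDegree_iterate_derivative p (l + m)
    rw [← hq, hdegp] at h
    omega
  have hdegq : q.natDegree = l - m :=
    le_antisymm hdegq_le (Polynomial.le_natDegree_of_ne_zero hqc0)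
  have hdegu : ((1 - X ^ 2 : Polynomial ℝ) ^ m).natDegree = 2 * m := by
    rw [Polynomial.natDegree_pow, hdeg2, mul_comm]
  have hlcu : ((1 - X ^ 2 : Polynomial ℝ) ^ m).leadingCoeff = (-1 : ℝ) ^ m := by
    rw [Polynomial.leadingCoeff_pow, hlc2]
  -- the top coefficient of A
  have hAc : A.coeff (l + m)
      = (-1 : ℝ) ^ m * (((2 * l).descFactorial (l + m) : ℝ) * (-1 : ℝ) ^ l) := by
    have h := Polynomial.coeff_mul_degree_add_degree ((1 - X ^ 2 : Polynomial ℝ) ^ m) q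
    rw [hdegu, hdegq, show 2 * m + (l - m) = l + m by omega, hlcu,
      Polynomial.leadingCoeff, hdegq, hqc] at h
    exact h
  have hdegA : A.natDegree ≤ l + m := by
    have h := Polynomial.natDegree_mul_le (p := (1 - X ^ 2 : Polynomial ℝ) ^ m) (q := q)
    rw [← hA, hdegu, hdegq] at h
    omega
  -- D^(l+m) A is the explicit constant
  have hDA : derivative^[l + m] A
      = C (((l + m).factorial : ℝ) * A.coeff (l + m)) := by
    have hd0 : (derivative^[l + m] A).natDegree = 0 := by
      have := Polynomial.natDegree_iterate_derivative A (l + m)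
      omega
    have := Polynomial.eq_C_of_natDegree_le_zero hd0.le
    rw [this, Polynomial.coeff_iterate_derivative, zero_add, Nat.descFactorial_self]
    simp [nsmul_eq_mul]
  -- rewrite the integrand
  have hint : (∫ t in (-1:ℝ)..1, (assocLegendreQ l m t) ^ 2)
      = ∫ t in (-1:ℝ)..1, A.eval t * q.eval t := by
    apply intervalIntegral.integral_congr
    intro t ht
    rw [Set.uIcc_of_le (by norm_num : (-1:ℝ) ≤ 1)] at ht
    have h1t : (0:ℝ) ≤ 1 - t ^ 2 := by nlinarith [ht.1, ht.2]
    have hiter : iteratedDeriv (m + l) (fun s : ℝ => (1 - s ^ 2) ^ l) t = q.eval t := by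
      rw [show (fun s : ℝ => (1 - s ^ 2) ^ l) = fun s : ℝ => p.eval s by
          funext s; simp [hp],
        iteratedDeriv_polyEval, hq, add_comm m l]
    simp only [assocLegendreQ, hiter, hA, Polynomial.eval_mul, Polynomial.eval_pow,
      Polynomial.eval_sub, Polynomial.eval_one, Polynomial.eval_X]
    rw [mul_pow, ← pow_mul, mul_comm m 2, pow_mul, Real.sq_sqrt h1t]
    ring
  -- rewrite eval p
  have hevp : ∀ t : ℝ, p.eval t = (1 - t ^ 2) ^ l := by intro t; simp [hp]
  rw [hint]
  calc ∫ t in (-1:ℝ)..1, A.eval t * q.eval t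
      = (-1:ℝ) ^ (l + m) * ∫ t in (-1:ℝ)..1, (derivative^[l + m] A).eval t * p.eval t := by
        exact hparts
    _ = ((-1:ℝ) ^ (l + m) * (((l + m).factorial : ℝ) * A.coeff (l + m)))
          * ∫ t in (-1:ℝ)..1, (1 - t ^ 2) ^ l := by
        rw [hDA]
        simp only [Polynomial.eval_C, hevp]
        rw [intervalIntegral.integral_const_mul]
        ring
    _ = (((2 * l).factorial : ℝ) * ((l + m).factorial : ℝ) / ((l - m).factorial : ℝ))
          * ∫ t in (-1:ℝ)..1, (1 - t ^ 2) ^ l := by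
        congr 1
        rw [hAc]
        have hfd : ((l - m).factorial : ℝ) * ((2 * l).descFactorial (l + m) : ℝ)
            = ((2 * l).factorial : ℝ) := by exact_mod_cast congrArg Nat.cast hfdNat
        have hsgn : (-1:ℝ) ^ (l + m) * ((-1:ℝ) ^ m * (-1:ℝ) ^ l) = 1 := by
          rw [← pow_add, ← pow_add]
          exact Even.neg_one_pow ⟨l + m, by ring⟩
        have hf0 : ((l - m).factorial : ℝ) ≠ 0 := by positivity
        rw [eq_div_iff hf0]
        have key : ((l + m).factorial : ℝ)
            * (((l - m).factorial : ℝ) * ((2 * l).descFactorial (l + m) : ℝ))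
            * ((-1:ℝ) ^ (l + m) * ((-1:ℝ) ^ m * (-1:ℝ) ^ l))
            = ((2 * l).factorial : ℝ) * ((l + m).factorial : ℝ) := by
          rw [hsgn, hfd]; ring
        linear_combination key
end

section
/- Let α, β, γ ∈ ℝ be pairwise distinct. Then the five real numbers -4(α+β+γ) + (16/7)√D, -4(α+β+γ) - (16/7)√D, -(12/7)(3α+β+3γ), -(12/7)(3α+3β+γ), -(12/7)(α+3β+3γ), where D = α²+β²+γ²-αβ-αγ-βγ, are pairwise distinct. -/
/-- The five `l = 2` first-order corrections are pairwise distinct for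
pairwise distinct `α, β, γ`. -/
theorem stmt8 (α β γ : ℝ) (hab : α ≠ β) (hbc : β ≠ γ) (hac : α ≠ γ) :
    List.Pairwise (· ≠ ·)
      [-4*(α+β+γ) + (16/7) * Real.sqrt (α^2 + β^2 + γ^2 - α*β - α*γ - β*γ),
       -4*(α+β+γ) - (16/7) * Real.sqrt (α^2 + β^2 + γ^2 - α*β - α*γ - β*γ),
       -(12/7) * (3*α + β + 3*γ),
       -(12/7) * (3*α + 3*β + γ),
       -(12/7) * (α + 3*β + 3*γ)] := by
  have h1 : α - β ≠ 0 := sub_ne_zero.mpr hab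
  have h2 : β - γ ≠ 0 := sub_ne_zero.mpr hbc
  have h3 : α - γ ≠ 0 := sub_ne_zero.mpr hac
  have p1 : (0:ℝ) < (α - β)^2 := by positivity
  have p2 : (0:ℝ) < (β - γ)^2 := by positivity
  have p3 : (0:ℝ) < (α - γ)^2 := by positivity
  have hD : (0:ℝ) ≤ α^2 + β^2 + γ^2 - α*β - α*γ - β*γ := by nlinarith
  set s := Real.sqrt (α^2 + β^2 + γ^2 - α*β - α*γ - β*γ) with hs
  have hs2 : s^2 = α^2 + β^2 + γ^2 - α*β - α*γ - β*γ := Real.sq_sqrt hD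
  have hsp : 0 < s := Real.sqrt_pos.mpr (by nlinarith)
  norm_num [List.pairwise_cons]
  refine ⟨⟨?_, ?_, ?_, ?_⟩, ⟨?_, ?_, ?_⟩, ⟨?_, ?_⟩, ?_⟩ <;>
    intro h <;> nlinarith [hs2, hsp, p1, p2, p3, h]
end
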